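/- arXiv:1506.01543 — 3 statements merged into one kernel-verified Lean document; each statement's English description precedes it below -/
import Mathlib

section
/- The number of nilpotent partial transformations on [n] whose domain has exactly k elements equals C(n-1, k) · n^k. -/
/-!
Inclusion–exclusion over cycles, as in the proof of the matrix-tree theorem. For a partial
transformation `f`, the signed sum of `(-1)^|S| · sign π` over the pairs `(S, π)` such that `f`
restricts to the permutation `π` of `S` is `1` if `f` is nilpotent and `0` otherwise: toggling one
fixed cycle of `f` reverses the sign. Summing over all `f` with a given `k`-element domain `D`
and exchanging the sums, each `(S, π)` with `S ⊆ D` is extended by exactly `n^(k - |S|)` maps,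
and the signs of the permutations of `S` cancel unless `|S| ≤ 1`. This leaves `n^k - k n^(k-1)`
nilpotent maps with domain `D`, and `C(n,k) (n^k - k n^(k-1)) = C(n-1,k) n^k`.
-/

/-- Iterate of a partial transformation on `Fin n`. -/
def iterPT {n : ℕ} (f : Fin n → Option (Fin n)) : ℕ → Fin n → Option (Fin n)
  | 0 => fun x => some x
  | k + 1 => fun x => (f x).bind (iterPT f k)

/-- A partial transformation is nilpotent iff its digraph has no directed cycle. -/
def Nilp {n : ℕ} (f : Fin n → Option (Fin n)) : Prop :=
  ∀ (x : Fin n) (k : ℕ), 0 < k → iterPT f k x ≠ some x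

/-- Cardinality of the domain of a partial transformation. -/
def domcard {n : ℕ} (f : Fin n → Option (Fin n)) : ℕ :=
  (Finset.univ.filter fun i => (f i).isSome).card

/-- Conjugation action of the symmetric group on partial transformations. -/
def conjPT {n : ℕ} (w : Equiv.Perm (Fin n)) (f : Fin n → Option (Fin n)) :
    Fin n → Option (Fin n) := fun x => (f (w⁻¹ x)).map w

open Finset Equiv

namespace Equiv.Perm

variable {α : Type*} [Fintype α] [DecidableEq α]

theorem IsCycleOn.sign_eq {c : Perm α} {Z : Finset α} (hc : c.IsCycleOn Z)
    (hsupp : c.support ⊆ Z) (hZ : Z.Nonempty) : sign c = -(-1) ^ #Z := by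
  obtain ⟨a, ha⟩ := hZ
  obtain rfl | hnt := Z.eq_singleton_or_nontrivial ha
  · have : c = 1 := card_support_le_one.mp ((card_le_card hsupp).trans (card_singleton a).le)
    simp [this]
  · have hsupp_eq : c.support = Z :=
      hsupp.antisymm fun z hz => mem_support.mpr (hc.apply_ne (by exact_mod_cast hnt) hz)
    have hcycle : c.IsCycle := isCycle_iff_exists_isCycleOn.mpr
      ⟨Z, by exact_mod_cast hnt, hc, fun x hx => hsupp (mem_support.mpr hx)⟩
    rw [hcycle.sign, hsupp_eq]

theorem sum_sign_of_support_subset (S : Finset α) :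
    ∑ π : Perm α with π.support ⊆ S, (sign π : ℤ) = if #S ≤ 1 then 1 else 0 := by
  split_ifs with hS
  · have : univ.filter (fun π : Perm α => π.support ⊆ S) = {1} := by
      ext π
      simp only [mem_filter, mem_univ, true_and, mem_singleton]
      exact ⟨fun h => card_support_le_one.mp ((card_le_card h).trans hS), by rintro rfl; simp⟩
    simp [this]
  · obtain ⟨a, ha, b, hb, hab⟩ := one_lt_card.mp (not_le.mp hS)
    have hswap (σ : Perm α) (hσ : σ.support ⊆ S) : (swap a b * σ).support ⊆ S :=
      (support_mul_le _ _).trans <|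
        union_subset (by simp [support_swap hab, insert_subset_iff, ha, hb]) hσ
    have hneg : ∑ π : Perm α with π.support ⊆ S, (sign π : ℤ) =
        ∑ π : Perm α with π.support ⊆ S, -(sign π : ℤ) := by
      refine sum_equiv (Equiv.mulLeft (swap a b)) (fun σ => ?_) (fun σ _ => ?_)
      · simp only [mem_filter, mem_univ, true_and, Equiv.coe_mulLeft]
        exact ⟨hswap σ, fun h => by simpa using hswap _ h⟩
      · simp [sign_swap hab]
    rw [sum_neg_distrib] at hneg
    omega

end Equiv.Perm

theorem Option.card_filter_isSome (α : Type*) [Fintype α] :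
    #{o : Option α | o.isSome} = Fintype.card α := by
  have : univ.filter (fun o : Option α => o.isSome) = univ.map Function.Embedding.some := by
    ext o
    cases o <;> simp
  rw [this, card_map, card_univ]

theorem Finset.sum_powerset_card_le_one {α : Type*} (D : Finset α) (m : ℤ) :
    ∑ S ∈ D.powerset, (if #S ≤ 1 then (-1) ^ #S * m ^ (#D - #S) else 0) =
      m ^ #D - #D * m ^ (#D - 1) := by
  rw [sum_powerset_apply_card (fun j => if j ≤ 1 then (-1) ^ j * m ^ (#D - j) else 0)]
  rcases #D with _ | d
  · simp
  · rw [sum_range_succ', sum_range_succ', sum_eq_zero fun j _ => by simp]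
    simp only [zero_add, zero_le_one, if_true, le_refl, pow_one, pow_zero, one_mul, Nat.sub_zero,
      Nat.choose_one_right, Nat.choose_zero_right, one_smul, nsmul_eq_mul]
    push_cast
    ring

theorem Nat.cast_choose_mul_pow_sub (n k : ℕ) :
    (n.choose k : ℤ) * ((n : ℤ) ^ k - k * (n : ℤ) ^ (k - 1)) =
      ((n - 1).choose k : ℤ) * (n : ℤ) ^ k := by
  rcases k with _ | k
  · simp
  rcases n with _ | n
  · simp
  rcases lt_or_ge n k with hnk | hkn
  · simp [Nat.choose_eq_zero_of_lt (Nat.lt_succ_of_lt hnk),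
      Nat.choose_eq_zero_of_lt (Nat.succ_lt_succ hnk)]
  have h := congrArg (Nat.cast (R := ℤ)) (Nat.choose_mul_succ_eq n (k + 1))
  push_cast [show n + 1 - (k + 1) = n - k by omega, Nat.cast_sub hkn] at h
  simp only [Nat.add_sub_cancel, Nat.cast_add, Nat.cast_one]
  linear_combination (-((n : ℤ) + 1) ^ k) * h

namespace PartialTransformation

variable {α : Type*} [Fintype α] [DecidableEq α]

def dom (f : α → Option α) : Finset α :=
  univ.filter fun i => (f i).isSome

def extendById (f : α → Option α) (x : α) : α :=
  (f x).getD x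

/-- The pairs `(S, π)` such that `f` agrees on `S` with a permutation `π` supported in `S`:
`S` is a union of cycles of `f`, and `π` is `f` on `S`. -/
def cyclicParts (f : α → Option α) : Finset (Finset α × Perm α) :=
  univ.filter fun p => p.2.support ⊆ p.1 ∧ ∀ s ∈ p.1, f s = some (p.2 s)

/-- `(-1)^(number of cycles of π in S)`, fixed points included. -/
def signedWeight (p : Finset α × Perm α) : ℤ :=
  (-1) ^ #p.1 * (Perm.sign p.2 : ℤ)

theorem mem_cyclicParts {f : α → Option α} {S : Finset α} {π : Perm α} :
    (S, π) ∈ cyclicParts f ↔ π.support ⊆ S ∧ ∀ s ∈ S, f s = some (π s) := by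
  simp [cyclicParts]

theorem signedWeight_union {S Z : Finset α} {π c : Perm α} (h : Disjoint S Z) :
    signedWeight (S ∪ Z, π * c) = signedWeight (S, π) * ((-1) ^ #Z * (Perm.sign c : ℤ)) := by
  simp only [signedWeight, card_union_of_disjoint h, pow_add, map_mul, Units.val_mul]
  ring

theorem card_dom_eq_and_mem_cyclicParts (D S : Finset α) (π : Perm α) :
    #{f : α → Option α | dom f = D ∧ (S, π) ∈ cyclicParts f} =
      if π.support ⊆ S ∧ S ⊆ D then Fintype.card α ^ (#D - #S) else 0 := by
  by_cases hπ : π.support ⊆ S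
  swap
  · simp [cyclicParts, hπ]
  let allowed (i : α) : Finset (Option α) :=
    {o | (o.isSome ↔ i ∈ D) ∧ (i ∈ S → o = some (π i))}
  have hpi : univ.filter (fun f : α → Option α => dom f = D ∧ (S, π) ∈ cyclicParts f) =
      Fintype.piFinset allowed := by
    ext f
    simp [cyclicParts, hπ, dom, Finset.ext_iff, allowed, forall_and]
  have hcard (i : α) : #(allowed i) =
      if i ∈ S then (if i ∈ D then 1 else 0) else if i ∈ D then Fintype.card α else 1 := by
    by_cases hiS : i ∈ S <;> by_cases hiD : i ∈ D <;>
      simp only [allowed, hiS, hiD, ↓reduceIte, iff_true, iff_false, forall_const,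
        IsEmpty.forall_iff, and_true]
    · exact card_eq_one.mpr ⟨some (π i), by ext o; cases o <;> simp⟩
    · exact card_eq_zero.mpr (filter_eq_empty_iff.mpr fun o _ ⟨h, h'⟩ => by simp [h'] at h)
    · exact Option.card_filter_isSome α
    · exact card_eq_one.mpr ⟨none, by ext o; cases o <;> simp⟩
  rw [hpi, Fintype.card_piFinset, Fintype.prod_congr _ _ hcard]
  split_ifs with hSD
  · rw [← card_sdiff_of_subset hSD.2, ← prod_const,
      ← Fintype.prod_ite_mem (D \ S) fun _ => _]
    refine Fintype.prod_congr _ _ fun i => ?_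
    by_cases hiS : i ∈ S
    · simp [hiS, hSD.2 hiS]
    · by_cases hiD : i ∈ D <;> simp [hiS, hiD]
  · obtain ⟨i, hiS, hiD⟩ := not_subset.mp fun h => hSD ⟨hπ, h⟩
    exact prod_eq_zero (mem_univ i) (by simp [hiS, hiD])

theorem sum_signedWeight_cyclicParts_over_dom (D : Finset α) :
    ∑ f : α → Option α with dom f = D, ∑ p ∈ cyclicParts f, signedWeight p =
      (Fintype.card α : ℤ) ^ #D - #D * (Fintype.card α : ℤ) ^ (#D - 1) :=
  calc ∑ f : α → Option α with dom f = D, ∑ p ∈ cyclicParts f, signedWeight p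
      = ∑ S : Finset α, ∑ π : Perm α,
          (#{f : α → Option α | dom f = D ∧ (S, π) ∈ cyclicParts f} : ℤ) *
            signedWeight (S, π) := by
        rw [sum_comm' (t' := univ) (s' := fun p => {f | dom f = D ∧ p ∈ cyclicParts f})
          (by simp), Fintype.sum_prod_type]
        simp
    _ = ∑ S ∈ D.powerset, (-1) ^ #S * (Fintype.card α : ℤ) ^ (#D - #S) *
          ∑ π : Perm α with π.support ⊆ S, (Perm.sign π : ℤ) := by
        rw [← Fintype.sum_ite_mem D.powerset]
        refine Fintype.sum_congr _ _ fun S => ?_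
        simp_rw [card_dom_eq_and_mem_cyclicParts, mem_powerset]
        split_ifs with hSD
        · rw [mul_sum, sum_filter]
          refine Fintype.sum_congr _ _ fun π => ?_
          by_cases hπ : π.support ⊆ S
          · simp only [hπ, hSD, and_self, ↓reduceIte, Nat.cast_pow, signedWeight]
            ring
          · simp [hπ]
        · simp [hSD]
    _ = (Fintype.card α : ℤ) ^ #D - #D * (Fintype.card α : ℤ) ^ (#D - 1) := by
        simp_rw [Perm.sum_sign_of_support_subset, mul_ite, mul_one, mul_zero]
        exact sum_powerset_card_le_one D _

variable {f : α → Option α} {S Z : Finset α} {π c : Perm α}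

structure IsCycleOf (f : α → Option α) (Z : Finset α) (c : Perm α) : Prop where
  nonempty : Z.Nonempty
  isCycleOn : c.IsCycleOn Z
  support_subset : c.support ⊆ Z
  apply_eq : ∀ z ∈ Z, f z = some (c z)

namespace IsCycleOf

theorem neg_one_pow_mul_sign (hc : IsCycleOf f Z c) : (-1) ^ #Z * (Perm.sign c : ℤ) = -1 := by
  rw [hc.isCycleOn.sign_eq hc.support_subset hc.nonempty]
  push_cast
  rw [mul_neg, ← mul_pow]
  norm_num

theorem eq_on_of_mem_cyclicParts (hc : IsCycleOf f Z c) (hp : (S, π) ∈ cyclicParts f)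
    {z : α} (hzZ : z ∈ Z) (hzS : z ∈ S) : π z = c z :=
  Option.some_injective _ (((mem_cyclicParts.mp hp).2 z hzS).symm.trans (hc.apply_eq z hzZ))

theorem subset_or_disjoint (hc : IsCycleOf f Z c) (hp : (S, π) ∈ cyclicParts f) :
    Z ⊆ S ∨ Disjoint S Z := by
  refine or_iff_not_imp_right.mpr fun hnd => ?_
  obtain ⟨z, hzS, hzZ⟩ := not_disjoint_iff.mp hnd
  have hpow (j : ℕ) : (c ^ j) z ∈ S := by
    induction j with
    | zero => exact hzS
    | succ j ih =>
      have hjZ : (c ^ j) z ∈ Z := hc.isCycleOn.1.mapsTo.perm_pow j (by exact_mod_cast hzZ)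
      rw [pow_succ', Perm.mul_apply, ← hc.eq_on_of_mem_cyclicParts hp hjZ ih]
      exact (Perm.isInvariant_of_support_le (mem_cyclicParts.mp hp).1 _).mpr ih
  intro y hy
  obtain ⟨j, -, rfl⟩ := hc.isCycleOn.exists_pow_eq hzZ hy
  exact hpow j

theorem union_mem_cyclicParts (hc : IsCycleOf f Z c) (hp : (S, π) ∈ cyclicParts f)
    (hd : Disjoint S Z) : (S ∪ Z, π * c) ∈ cyclicParts f := by
  obtain ⟨hπ, hf⟩ := mem_cyclicParts.mp hp
  refine mem_cyclicParts.mpr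
    ⟨(Perm.support_mul_le π c).trans (sup_le_sup hπ hc.support_subset), fun s hs => ?_⟩
  rcases mem_union.mp hs with hsS | hsZ
  · have hcs : c s = s :=
      Perm.notMem_support.mp fun h => disjoint_left.mp hd hsS (hc.support_subset h)
    rw [Perm.mul_apply, hcs, hf s hsS]
  · have hcs : c s ∉ S := fun h =>
      disjoint_left.mp hd h ((Perm.isInvariant_of_support_le hc.support_subset s).mpr hsZ)
    rw [Perm.mul_apply, Perm.notMem_support.mp fun h => hcs (hπ h), hc.apply_eq s hsZ]

theorem sdiff_mem_cyclicParts (hc : IsCycleOf f Z c) (hp : (S, π) ∈ cyclicParts f)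
    (hZS : Z ⊆ S) : (S \ Z, π * c⁻¹) ∈ cyclicParts f := by
  obtain ⟨hπ, hf⟩ := mem_cyclicParts.mp hp
  have hfix (y : α) (hy : y ∉ Z) : c⁻¹ y = y :=
    Perm.notMem_support.mp fun h => hy (hc.support_subset (Perm.support_inv c ▸ h))
  refine mem_cyclicParts.mpr ⟨fun y hy => ?_, fun s hs => ?_⟩
  · rw [Perm.mem_support, Perm.mul_apply] at hy
    refine mem_sdiff.mpr ⟨?_, fun hyZ => hy ?_⟩
    · by_contra hyS
      exact hy (by rw [hfix y fun h => hyS (hZS h), Perm.notMem_support.mp fun h => hyS (hπ h)])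
    · have hcZ : c⁻¹ y ∈ Z := hc.isCycleOn.inv.1.mapsTo (by exact_mod_cast hyZ)
      rw [hc.eq_on_of_mem_cyclicParts hp hcZ (hZS hcZ), ← Perm.mul_apply, mul_inv_cancel,
        Perm.one_apply]
  · obtain ⟨hsS, hsZ⟩ := mem_sdiff.mp hs
    rw [Perm.mul_apply, hfix s hsZ, hf s hsS]

/-- Toggling the cycle `Z` in or out of `S` is a sign-reversing involution on `cyclicParts f`. -/
theorem sum_signedWeight_eq_zero (hc : IsCycleOf f Z c) :
    ∑ p ∈ cyclicParts f, signedWeight p = 0 := by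
  rw [← sum_filter_add_sum_filter_not _ fun p => Z ⊆ p.1, add_eq_zero_iff_eq_neg,
    ← sum_neg_distrib]
  obtain ⟨x, hx⟩ := hc.nonempty
  refine sum_nbij' (fun p => (p.1 \ Z, p.2 * c⁻¹)) (fun p => (p.1 ∪ Z, p.2 * c)) ?_ ?_ ?_ ?_ ?_
  · rintro ⟨S, π⟩ hp
    simp only [mem_filter] at hp ⊢
    exact ⟨hc.sdiff_mem_cyclicParts hp.1 hp.2, fun h => (mem_sdiff.mp (h hx)).2 hx⟩
  · rintro ⟨S, π⟩ hp
    simp only [mem_filter] at hp ⊢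
    exact ⟨hc.union_mem_cyclicParts hp.1 ((hc.subset_or_disjoint hp.1).resolve_left hp.2),
      subset_union_right⟩
  · rintro ⟨S, π⟩ hp
    simp [sdiff_union_of_subset (mem_filter.mp hp).2]
  · rintro ⟨S, π⟩ hp
    simp only [mem_filter] at hp
    simp [union_sdiff_cancel_right ((hc.subset_or_disjoint hp.1).resolve_left hp.2)]
  · rintro ⟨S, π⟩ hp
    have hZS : Z ⊆ S := (mem_filter.mp hp).2
    conv_lhs => rw [← sdiff_union_of_subset hZS, ← inv_mul_cancel_right π c]
    rw [signedWeight_union sdiff_disjoint, hc.neg_one_pow_mul_sign, mul_neg_one]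

end IsCycleOf

section Nilpotent

open Function

variable {n : ℕ} {f : Fin n → Option (Fin n)}

theorem iterPT_of_mem_cyclicParts {S : Finset (Fin n)} {π : Perm (Fin n)}
    (hp : (S, π) ∈ cyclicParts f) {s : Fin n} (hs : s ∈ S) (j : ℕ) :
    iterPT f j s = some ((π ^ j) s) := by
  obtain ⟨hπ, hf⟩ := mem_cyclicParts.mp hp
  induction j generalizing s with
  | zero => rfl
  | succ j ih =>
    have hπs : π s ∈ S := (Perm.isInvariant_of_support_le hπ s).mpr hs
    simp only [iterPT, hf s hs, Option.bind_some, ih hπs, pow_succ, Perm.mul_apply]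

theorem cyclicParts_eq_singleton_of_nilp (hf : Nilp f) : cyclicParts f = {(∅, 1)} := by
  refine eq_singleton_iff_unique_mem.mpr ⟨by simp [cyclicParts], fun ⟨S, π⟩ hp => ?_⟩
  obtain rfl : S = ∅ := eq_empty_of_forall_notMem fun s hs =>
    hf s (orderOf π) (orderOf_pos π) <| by
      rw [iterPT_of_mem_cyclicParts hp hs, pow_orderOf_eq_one, Perm.one_apply]
  rw [Perm.support_eq_empty_iff.mp (subset_empty.mp (mem_cyclicParts.mp hp).1)]

theorem iterPT_eq_some {k : ℕ} {x z : Fin n} (h : iterPT f k x = some z) :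
    z = (extendById f)^[k] x ∧
      ∀ i < k, f ((extendById f)^[i] x) = some ((extendById f)^[i + 1] x) := by
  induction k generalizing x with
  | zero => exact ⟨(Option.some_injective _ h).symm, by simp⟩
  | succ k ih =>
    cases hfx : f x with
    | none => simp [iterPT, hfx] at h
    | some y =>
      have hgx : extendById f x = y := by simp [extendById, hfx]
      obtain ⟨rfl, hstep⟩ := ih (by simpa [iterPT, hfx] using h)
      refine ⟨by rw [iterate_succ_apply, hgx], fun i hi => ?_⟩
      rcases i with _ | i
      · simp [hfx, hgx]
      · simpa only [iterate_succ_apply, hgx] using hstep i (by omega)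

/-- The cycle through a periodic point `x` is its orbit under `extendById f`, listed up to the
minimal period; `c` is the cyclic permutation of that list. -/
theorem exists_isCycleOf_of_not_nilp (hf : ¬Nilp f) : ∃ Z c, IsCycleOf f Z c := by
  obtain ⟨x, k, hk, hx⟩ : ∃ x k, 0 < k ∧ iterPT f k x = some x := by simpa [Nilp] using hf
  set g := extendById f
  obtain ⟨hxk, hstep⟩ := iterPT_eq_some hx
  have hper : IsPeriodicPt g k x := hxk.symm
  have hp : 0 < minimalPeriod g x :=
    minimalPeriod_pos_of_mem_periodicPts (mk_mem_periodicPts hk hper)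
  have hpk : minimalPeriod g x ≤ k := hper.minimalPeriod_le hk
  set l := (List.range (minimalPeriod g x)).map fun i => g^[i] x
  have hl : l.Nodup := Cycle.nodup_coe_iff.mp (nodup_periodicOrbit (f := g) (x := x))
  refine ⟨l.toFinset, l.formPerm,
    ⟨⟨x, ?_⟩, ?_, List.support_formPerm_le l, fun z hz => ?_⟩⟩
  · simpa [l] using ⟨0, hp, rfl⟩
  · simpa using hl.isCycleOn_formPerm
  · obtain ⟨i, hi, rfl⟩ : ∃ i < minimalPeriod g x, z = g^[i] x := by simpa [l] using hz
    have hnext := List.formPerm_apply_getElem l hl i (by simpa [l] using hi)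
    simp only [l, List.getElem_map, List.getElem_range, List.length_map, List.length_range,
      iterate_mod_minimalPeriod_eq] at hnext
    rw [hnext]
    exact hstep i (by omega)

theorem sum_signedWeight_cyclicParts_eq_ite_nilp (f : Fin n → Option (Fin n))
    [Decidable (Nilp f)] :
    ∑ p ∈ cyclicParts f, signedWeight p = if Nilp f then 1 else 0 := by
  split_ifs with hf
  · simp [cyclicParts_eq_singleton_of_nilp hf, signedWeight]
  · obtain ⟨Z, c, hc⟩ := exists_isCycleOf_of_not_nilp hf
    exact hc.sum_signedWeight_eq_zero

theorem domcard_eq_card_dom (f : Fin n → Option (Fin n)) : domcard f = #(dom f) :=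
  rfl

open Classical in
theorem card_dom_eq_and_nilp (D : Finset (Fin n)) :
    (#{f : Fin n → Option (Fin n) | dom f = D ∧ Nilp f} : ℤ) =
      (n : ℤ) ^ #D - #D * (n : ℤ) ^ (#D - 1) := by
  have h := sum_signedWeight_cyclicParts_over_dom D
  rw [Fintype.card_fin] at h
  rw [← h]
  simp_rw [sum_signedWeight_cyclicParts_eq_ite_nilp]
  rw [sum_boole, filter_filter]

open Classical in
theorem card_nilp_and_domcard_eq (n k : ℕ) :
    (#{f : Fin n → Option (Fin n) | Nilp f ∧ domcard f = k} : ℤ) =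
      n.choose k * ((n : ℤ) ^ k - k * (n : ℤ) ^ (k - 1)) := by
  rw [card_eq_sum_card_fiberwise (f := dom) (t := powersetCard k univ) fun f hf =>
    mem_powersetCard.mpr ⟨subset_univ _, domcard_eq_card_dom f ▸ (mem_filter.mp hf).2.2⟩]
  push_cast
  rw [sum_congr rfl fun D hD => ?_, sum_const, card_powersetCard, card_univ, Fintype.card_fin,
    nsmul_eq_mul]
  obtain ⟨-, rfl⟩ := mem_powersetCard.mp hD
  rw [filter_filter, ← card_dom_eq_and_nilp D]
  congr 2
  refine filter_congr fun f _ => ⟨fun h => ⟨h.2, h.1.1⟩, fun h => ⟨⟨h.2, ?_⟩, h.1⟩⟩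
  rw [domcard_eq_card_dom, h.1]

end Nilpotent

end PartialTransformation

open PartialTransformation in
/-- the number of nilpotent partial transformations on `[n]` whose
domain has exactly `k` elements is `C(n-1, k) * n^k`. -/
theorem stmt2 (n k : ℕ) :
    Nat.card {f : Fin n → Option (Fin n) // Nilp f ∧ domcard f = k} =
      Nat.choose (n - 1) k * n ^ k := by
  classical
  rw [Nat.card_eq_fintype_card, Fintype.card_subtype]
  exact_mod_cast (card_nilp_and_domcard_eq n k).trans (Nat.cast_choose_mul_pow_sub n k)
end

section
/- The multiplicity of the trivial representation of S_n in the permutation representation on nilpotent partial transformations on [n] equals the number of unlabeled rooted trees on n+1 vertices. -/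
/-- The subspace of `Sₙ`-invariant vectors in the permutation module `ℂ[X]`
where `X` is the set of nilpotent partial transformations on `[n]` (realized as
invariant functions supported on nilpotent partial transformations). -/
noncomputable def invSub (n : ℕ) : Submodule ℂ ((Fin n → Option (Fin n)) → ℂ) where
  carrier := {v | (∀ (w : Equiv.Perm (Fin n)) (f : Fin n → Option (Fin n)),
      v (conjPT w f) = v f) ∧ (∀ f, ¬ Nilp f → v f = 0)}
  add_mem' := fun {a} {b} ha hb =>
    ⟨fun w f => by simp [ha.1 w f, hb.1 w f], fun f hf => by simp [ha.2 f hf, hb.2 f hf]⟩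
  zero_mem' := ⟨fun _ _ => rfl, fun _ _ => rfl⟩
  smul_mem' := fun c a ha =>
    ⟨fun w f => by simp [ha.1 w f], fun f hf => by simp [ha.2 f hf]⟩

/-!
A vector of the permutation module is invariant iff it is constant on orbits, so the multiplicity
of the trivial representation is the number of conjugacy classes of nilpotent partial
transformations of `[n]`. Such an `f` is a rooted forest on `[n]` (edges `x → f x`, roots where `f`
is undefined). Adjoining a new vertex `n` and sending every root to it gives a rooted tree on
`[n+1]` whose root `n` is the only point outside the domain. Every tree arises this way once its
root is moved to `n`, and a conjugation between two such trees fixes the common root, so it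
restricts to a conjugation between the forests.
-/

open Function Equiv

theorem Quot.map_bijective {α β : Type*} {r : α → α → Prop} {s : β → β → Prop}
    (hs : Equivalence s) (φ : α → β) (hφ : ∀ a b, r a b ↔ s (φ a) (φ b))
    (hsurj : ∀ y, ∃ x, s (φ x) y) :
    Bijective (Quot.map φ fun a b => (hφ a b).1) := by
  refine ⟨fun qa qb => ?_, fun qy => ?_⟩
  · induction qa using Quot.ind with | mk a =>
    induction qb using Quot.ind with | mk b =>
    intro h
    exact Quot.sound ((hφ a b).2 (hs.eqvGen_iff.1 (Quot.eqvGen_exact h)))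
  · induction qy using Quot.ind with | mk y =>
    obtain ⟨x, hx⟩ := hsurj y
    exact ⟨Quot.mk r x, Quot.sound hx⟩

section Conjugation

variable {n : ℕ}

@[simp]
lemma conjPT_one (f : Fin n → Option (Fin n)) : conjPT 1 f = f := by
  funext x
  simp [conjPT]

lemma conjPT_mul (v w : Perm (Fin n)) (f : Fin n → Option (Fin n)) :
    conjPT (v * w) f = conjPT v (conjPT w f) := by
  funext x
  simp [conjPT, Option.map_map, mul_inv_rev, comp_def]

@[simp]
lemma conjPT_eq_none_iff (w : Perm (Fin n)) (f : Fin n → Option (Fin n)) (x : Fin n) :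
    conjPT w f x = none ↔ f (w⁻¹ x) = none := by
  simp [conjPT]

lemma iterPT_conjPT (w : Perm (Fin n)) (f : Fin n → Option (Fin n)) (k : ℕ) (x : Fin n) :
    iterPT (conjPT w f) k x = (iterPT f k (w⁻¹ x)).map w := by
  induction k generalizing x with
  | zero => simp [iterPT]
  | succ k ih =>
    simp only [iterPT, conjPT]
    cases f (w⁻¹ x) <;> simp [ih]

lemma Nilp.conjPT {f : Fin n → Option (Fin n)} (hf : Nilp f) (w : Perm (Fin n)) :
    Nilp (conjPT w f) := by
  intro x k hk h
  rw [iterPT_conjPT, Option.map_eq_some_iff] at h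
  obtain ⟨y, hy, rfl⟩ := h
  exact hf y k hk (by simpa using hy)

@[simp]
lemma nilp_conjPT_iff {w : Perm (Fin n)} {f : Fin n → Option (Fin n)} :
    Nilp (conjPT w f) ↔ Nilp f :=
  ⟨fun h => by simpa [← conjPT_mul] using h.conjPT w⁻¹, fun h => h.conjPT w⟩

lemma eq_conjPT_iff {w : Perm (Fin n)} {f g : Fin n → Option (Fin n)} :
    g = conjPT w f ↔ ∀ x y, f x = some y ↔ g (w x) = some (w y) := by
  constructor
  · rintro rfl x y
    simp [conjPT]
  · intro h
    funext x
    obtain ⟨x, rfl⟩ := w.surjective x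
    simp only [conjPT, Perm.coe_inv, symm_apply_apply]
    cases hfx : f x with
    | some y => exact (h x y).1 hfx
    | none =>
      cases hgx : g (w x) with
      | none => rfl
      | some z =>
        obtain ⟨z, rfl⟩ := w.surjective z
        simp [(h x z).2 hgx] at hfx

def IsConjPT (f g : Fin n → Option (Fin n)) : Prop :=
  ∃ w : Perm (Fin n), g = conjPT w f

lemma isConjPT_equivalence : Equivalence (IsConjPT (n := n)) where
  refl f := ⟨1, (conjPT_one f).symm⟩
  symm := by
    rintro f g ⟨w, rfl⟩
    exact ⟨w⁻¹, by rw [← conjPT_mul, inv_mul_cancel, conjPT_one]⟩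
  trans := by
    rintro f g h ⟨v, rfl⟩ ⟨w, rfl⟩
    exact ⟨w * v, (conjPT_mul w v f).symm⟩

end Conjugation

section AddRoot

variable {n : ℕ}

/-- Adjoin the root `Fin.last n`, the image of every point outside the domain of `f`. -/
def addRoot (f : Fin n → Option (Fin n)) : Fin (n + 1) → Option (Fin (n + 1)) :=
  fun x => (finSuccEquivLast x).map (finSuccEquivLast.symm ∘ f)

@[simp]
lemma addRoot_last (f : Fin n → Option (Fin n)) : addRoot f (Fin.last n) = none := by
  simp [addRoot, finSuccEquivLast_last]

@[simp]
lemma addRoot_castSucc (f : Fin n → Option (Fin n)) (i : Fin n) :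
    addRoot f i.castSucc = some (finSuccEquivLast.symm (f i)) := by
  simp [addRoot, finSuccEquivLast_castSucc]

lemma addRoot_eq_none_iff (f : Fin n → Option (Fin n)) (x : Fin (n + 1)) :
    addRoot f x = none ↔ x = Fin.last n := by
  induction x using Fin.lastCases with
  | last => simp
  | cast i => simp [(Fin.castSucc_lt_last i).ne]

lemma addRoot_injective : Injective (addRoot (n := n)) := by
  intro f g h
  funext i
  simpa using congrFun h i.castSucc

lemma iterPT_addRoot_last_succ (f : Fin n → Option (Fin n)) (k : ℕ) :
    iterPT (addRoot f) (k + 1) (Fin.last n) = none := by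
  simp [iterPT]

lemma iterPT_addRoot_castSucc (f : Fin n → Option (Fin n)) (k : ℕ) (i j : Fin n) :
    iterPT (addRoot f) k i.castSucc = some j.castSucc ↔ iterPT f k i = some j := by
  induction k generalizing i with
  | zero => simp [iterPT]
  | succ k ih =>
    simp only [iterPT, addRoot_castSucc, Option.bind_some]
    cases hfi : f i with
    | some m => simpa using ih m
    | none =>
      cases k with
      | zero => simp [iterPT, (Fin.castSucc_lt_last j).ne']
      | succ k => simp [iterPT_addRoot_last_succ]

@[simp]
lemma nilp_addRoot_iff {f : Fin n → Option (Fin n)} : Nilp (addRoot f) ↔ Nilp f := by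
  constructor
  · intro h i k hk hi
    exact h i.castSucc k hk ((iterPT_addRoot_castSucc f k i i).2 hi)
  · intro h x k hk hx
    induction x using Fin.lastCases with
    | last =>
      obtain ⟨k, rfl⟩ := Nat.exists_eq_succ_of_ne_zero hk.ne'
      simp [iterPT_addRoot_last_succ] at hx
    | cast i => exact h i k hk ((iterPT_addRoot_castSucc f k i i).1 hx)

lemma domcard_addRoot (f : Fin n → Option (Fin n)) : domcard (addRoot f) = n := by
  have : (Finset.univ.filter fun x => (addRoot f x).isSome) = Finset.univ.erase (Fin.last n) := by
    ext x
    simp [Option.isSome_iff_ne_none, addRoot_eq_none_iff]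
  rw [domcard, this, Finset.card_erase_of_mem (Finset.mem_univ _), Finset.card_fin,
    Nat.add_sub_cancel]

lemma exists_addRoot_eq {g : Fin (n + 1) → Option (Fin (n + 1))}
    (hg : ∀ x, g x = none ↔ x = Fin.last n) : ∃ f, addRoot f = g := by
  refine ⟨fun i => (g i.castSucc).bind finSuccEquivLast, funext fun x => ?_⟩
  induction x using Fin.lastCases with
  | last => simp [(hg _).2 rfl]
  | cast i =>
    obtain ⟨y, hy⟩ := Option.ne_none_iff_exists'.1 ((hg _).not.2 (Fin.castSucc_lt_last i).ne)
    simp [hy]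

def extendPerm (w : Perm (Fin n)) : Perm (Fin (n + 1)) :=
  finSuccEquivLast.symm.permCongr w.optionCongr

@[simp]
lemma extendPerm_last (w : Perm (Fin n)) : extendPerm w (Fin.last n) = Fin.last n := by
  simp [extendPerm, finSuccEquivLast_last]

@[simp]
lemma extendPerm_castSucc (w : Perm (Fin n)) (i : Fin n) :
    extendPerm w i.castSucc = (w i).castSucc := by
  simp [extendPerm, finSuccEquivLast_castSucc, finSuccEquivLast_symm_some]

@[simp]
lemma extendPerm_inv (w : Perm (Fin n)) : (extendPerm w)⁻¹ = extendPerm w⁻¹ := by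
  ext x : 1
  rw [Perm.inv_eq_iff_eq]
  induction x using Fin.lastCases with
  | last => simp
  | cast i => simp

lemma exists_extendPerm_eq {e : Perm (Fin (n + 1))} (he : e (Fin.last n) = Fin.last n) :
    ∃ w, extendPerm w = e := by
  set σ : Perm (Option (Fin n)) := finSuccEquivLast.permCongr e
  have hσ : σ none = none := by simp [σ, he, finSuccEquivLast_last]
  refine ⟨removeNone σ, Equiv.ext fun x => ?_⟩
  simp [extendPerm, map_equiv_removeNone, hσ, σ]

lemma addRoot_conjPT (w : Perm (Fin n)) (f : Fin n → Option (Fin n)) :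
    addRoot (conjPT w f) = conjPT (extendPerm w) (addRoot f) := by
  funext x
  induction x using Fin.lastCases with
  | last => simp [conjPT]
  | cast i =>
    simp only [conjPT, extendPerm_inv, extendPerm_castSucc, addRoot_castSucc]
    cases f (w⁻¹ i) <;> simp [finSuccEquivLast_symm_some]

lemma isConjPT_addRoot_iff {f g : Fin n → Option (Fin n)} :
    IsConjPT (addRoot f) (addRoot g) ↔ IsConjPT f g := by
  constructor
  · rintro ⟨e, h⟩
    have he : e (Fin.last n) = Fin.last n := by
      rw [← addRoot_eq_none_iff g, h]
      simp
    obtain ⟨w, rfl⟩ := exists_extendPerm_eq he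
    exact ⟨w, addRoot_injective (h.trans (addRoot_conjPT w f).symm)⟩
  · rintro ⟨w, rfl⟩
    exact ⟨extendPerm w, addRoot_conjPT w f⟩

lemma exists_eq_none_iff_of_domcard {g : Fin (n + 1) → Option (Fin (n + 1))}
    (hg : domcard g = n) : ∃ r, ∀ x, g x = none ↔ x = r := by
  have hcard : (Finset.univ.filter fun x => g x = none).card = 1 := by
    have := Finset.card_filter_add_card_filter_not (s := Finset.univ) fun x => (g x).isSome
    simp only [domcard, Option.not_isSome_iff_eq_none] at hg this
    simp only [Finset.card_univ, Fintype.card_fin] at this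
    omega
  obtain ⟨r, hr⟩ := Finset.card_eq_one.1 hcard
  exact ⟨r, fun x => by simpa using Finset.ext_iff.1 hr x⟩

lemma exists_isConjPT_addRoot {g : Fin (n + 1) → Option (Fin (n + 1))} (hg : domcard g = n) :
    ∃ f, IsConjPT (addRoot f) g := by
  obtain ⟨r, hr⟩ := exists_eq_none_iff_of_domcard hg
  have hroot : ∀ x, conjPT (swap r (Fin.last n)) g x = none ↔ x = Fin.last n := by
    intro x
    rw [conjPT_eq_none_iff, hr, swap_inv, swap_apply_eq_iff, swap_apply_left]
  obtain ⟨f, hf⟩ := exists_addRoot_eq hroot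
  exact ⟨f, isConjPT_equivalence.symm ⟨_, hf⟩⟩

end AddRoot

section Orbits

abbrev NilpPT (n : ℕ) := {f : Fin n → Option (Fin n) // Nilp f}

abbrev RootedTreePT (n : ℕ) := {g : Fin (n + 1) → Option (Fin (n + 1)) // Nilp g ∧ domcard g = n}

lemma card_quot_nilpPT_eq_card_quot_rootedTreePT (n : ℕ) :
    Nat.card (Quot (IsConjPT on fun f : NilpPT n => f.1)) =
      Nat.card (Quot (IsConjPT on fun g : RootedTreePT n => g.1)) := by
  let φ (f : NilpPT n) : RootedTreePT n :=
    ⟨addRoot f.1, nilp_addRoot_iff.2 f.2, domcard_addRoot f.1⟩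
  refine Nat.card_eq_of_bijective _ (Quot.map_bijective (isConjPT_equivalence.comap Subtype.val) φ
    (fun f g => isConjPT_addRoot_iff.symm) fun g => ?_)
  obtain ⟨f, hf⟩ := exists_isConjPT_addRoot g.2.2
  have hfn : Nilp f := by
    obtain ⟨w, hw⟩ := hf
    simpa [hw] using g.2.1
  exact ⟨⟨f, hfn⟩, hf⟩

noncomputable def invSubEquiv (n : ℕ) :
    invSub n ≃ₗ[ℂ] (Quot (IsConjPT on fun f : NilpPT n => f.1) → ℂ) :=
  open scoped Classical in
  { toFun v := Quot.lift (fun f => v.1 f.1) (by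
      rintro f g ⟨w, hw⟩
      exact ((congrArg v.1 hw).trans (v.2.1 w f.1)).symm)
    map_add' _ _ := funext fun q => by induction q using Quot.ind; rfl
    map_smul' _ _ := funext fun q => by induction q using Quot.ind; rfl
    invFun u := ⟨fun g => if h : Nilp g then u (Quot.mk _ ⟨g, h⟩) else 0, by
      refine ⟨fun w f => ?_, fun f hf => dif_neg hf⟩
      dsimp only
      by_cases h : Nilp f
      · rw [dif_pos h, dif_pos (h.conjPT w)]
        exact congrArg u (Quot.sound ⟨w⁻¹, by simp [← conjPT_mul]⟩)
      · rw [dif_neg h, dif_neg (nilp_conjPT_iff.not.2 h)]⟩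
    left_inv v := Subtype.ext <| funext fun g => by
      by_cases h : Nilp g
      · exact dif_pos h
      · exact (dif_neg h).trans (v.2.2 g h).symm
    right_inv u := funext fun q => by
      induction q using Quot.ind with | mk f => exact dif_pos f.2 }

lemma finrank_invSub (n : ℕ) :
    Module.finrank ℂ (invSub n) = Nat.card (Quot (IsConjPT on fun f : NilpPT n => f.1)) := by
  have : Fintype (Quot (IsConjPT on fun f : NilpPT n => f.1)) := Fintype.ofFinite _
  rw [(invSubEquiv n).finrank_eq, Module.finrank_fintype_fun_eq_card, Nat.card_eq_fintype_card]

end Orbits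

/-- the multiplicity of the trivial representation of `Sₙ` in the
permutation representation on nilpotent partial transformations on `[n]` (i.e.
the dimension of the invariant subspace) equals the number of unlabeled rooted
trees on `n+1` vertices (isomorphism classes of nilpotent partial
transformations on `[n+1]` with domain of size `n`, i.e. rooted trees). -/
theorem stmt7 (n : ℕ) :
    Module.finrank ℂ (invSub n) =
      Nat.card (Quot (fun g h : {g : Fin (n+1) → Option (Fin (n+1)) //
          Nilp g ∧ domcard g = n} =>
        ∃ e : Fin (n+1) ≃ Fin (n+1),
          ∀ x y : Fin (n+1), g.1 x = some y ↔ h.1 (e x) = some (e y))) := by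
  have hrel : (IsConjPT on fun g : RootedTreePT n => g.1) =
      fun g h => ∃ e : Fin (n+1) ≃ Fin (n+1), ∀ x y, g.1 x = some y ↔ h.1 (e x) = some (e y) := by
    funext g h
    simp only [onFun, IsConjPT, eq_conjPT_iff]
  rw [finrank_invSub, card_quot_nilpPT_eq_card_quot_rootedTreePT, hrel]
end

section
/- Define sequences a_n (number of blossoming forests on n vertices without isolated vertices) and b_n (number with an isolated vertex), with a_1 = 0, a_2 = 1 and recurrences b_{n+1} = a_n and a_n = a_{n-1} + 2a_{n-2} for n ≥ 3. Then the total number d_n = a_n + b_n of blossoming forests on n vertices equals 2^{n-2} for all n ≥ 2. -/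
/-- with `a n` the number of blossoming forests on `n` vertices
without isolated vertices and `b n` the number of those with an isolated
vertex, satisfying `a 1 = 0`, `a 2 = 1`, `b (n+1) = a n`, and
`a n = a (n-1) + 2 a (n-2)` for `n ≥ 3`, the total number
`d n = a n + b n` of blossoming forests on `n` vertices is `2^(n-2)` for all
`n ≥ 2`. -/
theorem stmt16 (a b : ℕ → ℕ) (ha1 : a 1 = 0) (ha2 : a 2 = 1)
    (hb : ∀ n, 1 ≤ n → b (n + 1) = a n)
    (ha : ∀ n, 3 ≤ n → a n = a (n - 1) + 2 * a (n - 2)) :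
    ∀ n, 2 ≤ n → a n + b n = 2 ^ (n - 2) := by
  have key : ∀ n, 2 ≤ n → a n + a (n - 1) = 2 ^ (n - 2) := by
    intro n hn
    induction n with
    | zero => omega
    | succ m ih =>
      rcases Nat.lt_or_ge m 2 with hm | hm
      · interval_cases m
        · omega
        · simpa [ha1, ha2] using rfl
      · have h3 : 3 ≤ m + 1 := by omega
        have := ha (m + 1) h3
        have hrec : a (m + 1) = a m + 2 * a (m - 1) := by
          simpa [Nat.succ_sub_one, show m + 1 - 2 = m - 1 by omega] using this
        have ihm := ih hm
        have : a (m + 1) + a m = 2 * (a m + a (m - 1)) := by omega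
        rw [show m + 1 - 1 = m from rfl, this, ihm,
          show m + 1 - 2 = (m - 2) + 1 by omega, pow_succ]
        ring
  intro n hn
  have hb' : b n = a (n - 1) := by
    have := hb (n - 1) (by omega)
    simpa [show n - 1 + 1 = n by omega] using this
  rw [hb']
  exact key n hn
end
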